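/- arXiv:1910.12997 — 3 statements merged into one kernel-verified Lean document; each statement's English description precedes it below -/
import Mathlib

section
/- For K = 8, if nonnegative reals d₁,...,d₈ and reals 0 < α₁ ≤ ⋯ ≤ α₈ ≤ 1 satisfy the four inequalities 4d₁+2d₃+d₇+d₈ ≤ 2α₁+α₃+α₈, 4d₂+2d₃+d₇+d₈ ≤ 2α₂+α₃+α₈, 4d₄+2d₆+d₇+d₈ ≤ 2α₄+α₆+α₈, and 4d₅+2d₆+d₇+d₈ ≤ 2α₅+α₆+α₈, then d₁+⋯+d₈ ≤ (∑_{k=1}^{8} α_k + α₈ − α₇)/2. -/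
/-- K = 8 instance of the converse bound. -/
theorem sum_gdof_K8 (d₁ d₂ d₃ d₄ d₅ d₆ d₇ d₈ : ℝ) (α₁ α₂ α₃ α₄ α₅ α₆ α₇ α₈ : ℝ)
    (hd₁ : 0 ≤ d₁) (hd₂ : 0 ≤ d₂) (hd₃ : 0 ≤ d₃) (hd₄ : 0 ≤ d₄)
    (hd₅ : 0 ≤ d₅) (hd₆ : 0 ≤ d₆) (hd₇ : 0 ≤ d₇) (hd₈ : 0 ≤ d₈)
    (hα0 : 0 < α₁) (h12 : α₁ ≤ α₂) (h23 : α₂ ≤ α₃) (h34 : α₃ ≤ α₄)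
    (h45 : α₄ ≤ α₅) (h56 : α₅ ≤ α₆) (h67 : α₆ ≤ α₇) (h78 : α₇ ≤ α₈) (h8 : α₈ ≤ 1)
    (h1 : 4 * d₁ + 2 * d₃ + d₇ + d₈ ≤ 2 * α₁ + α₃ + α₈)
    (h2 : 4 * d₂ + 2 * d₃ + d₇ + d₈ ≤ 2 * α₂ + α₃ + α₈)
    (h3 : 4 * d₄ + 2 * d₆ + d₇ + d₈ ≤ 2 * α₄ + α₆ + α₈)
    (h4 : 4 * d₅ + 2 * d₆ + d₇ + d₈ ≤ 2 * α₅ + α₆ + α₈) :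
    d₁ + d₂ + d₃ + d₄ + d₅ + d₆ + d₇ + d₈
      ≤ ((α₁ + α₂ + α₃ + α₄ + α₅ + α₆ + α₇ + α₈) + α₈ - α₇) / 2 := by
  linarith
end

section
/- For K = 9, if nonnegative reals d₁,...,d₉ and reals 0 < α₁ ≤ ⋯ ≤ α₉ ≤ 1 satisfy 8d₁+4d₅+2d₇+d₈+d₉ ≤ 4α₁+2α₅+α₇+α₉, 8d₂+4d₅+2d₇+d₈+d₉ ≤ 4α₂+2α₅+α₇+α₉, 8d₃+4d₆+2d₇+d₈+d₉ ≤ 4α₃+2α₆+α₇+α₉, 8d₄+4d₆+2d₇+d₈+d₉ ≤ 4α₄+2α₆+α₇+α₉, and d₈+d₉ ≤ α₉, then d₁+⋯+d₉ ≤ (∑_{k=1}^{9} α_k + α₉ − α₈)/2. -/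
/-- K = 9 instance of the converse bound. -/
theorem sum_gdof_K9 (d₁ d₂ d₃ d₄ d₅ d₆ d₇ d₈ d₉ : ℝ) (α₁ α₂ α₃ α₄ α₅ α₆ α₇ α₈ α₉ : ℝ)
    (hd₁ : 0 ≤ d₁) (hd₂ : 0 ≤ d₂) (hd₃ : 0 ≤ d₃) (hd₄ : 0 ≤ d₄) (hd₅ : 0 ≤ d₅)
    (hd₆ : 0 ≤ d₆) (hd₇ : 0 ≤ d₇) (hd₈ : 0 ≤ d₈) (hd₉ : 0 ≤ d₉)
    (hα0 : 0 < α₁) (h12 : α₁ ≤ α₂) (h23 : α₂ ≤ α₃) (h34 : α₃ ≤ α₄) (h45 : α₄ ≤ α₅)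
    (h56 : α₅ ≤ α₆) (h67 : α₆ ≤ α₇) (h78 : α₇ ≤ α₈) (h89 : α₈ ≤ α₉) (h9 : α₉ ≤ 1)
    (h1 : 8 * d₁ + 4 * d₅ + 2 * d₇ + d₈ + d₉ ≤ 4 * α₁ + 2 * α₅ + α₇ + α₉)
    (h2 : 8 * d₂ + 4 * d₅ + 2 * d₇ + d₈ + d₉ ≤ 4 * α₂ + 2 * α₅ + α₇ + α₉)
    (h3 : 8 * d₃ + 4 * d₆ + 2 * d₇ + d₈ + d₉ ≤ 4 * α₃ + 2 * α₆ + α₇ + α₉)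
    (h4 : 8 * d₄ + 4 * d₆ + 2 * d₇ + d₈ + d₉ ≤ 4 * α₄ + 2 * α₆ + α₇ + α₉)
    (h5 : d₈ + d₉ ≤ α₉) :
    d₁ + d₂ + d₃ + d₄ + d₅ + d₆ + d₇ + d₈ + d₉
      ≤ ((α₁ + α₂ + α₃ + α₄ + α₅ + α₆ + α₇ + α₈ + α₉) + α₉ - α₈) / 2 := by
  linarith
end

section
/- Let k,l ∈ [ℓ,K] with k ≠ l and define the interference dimension set I_{k,ℓ} = ⋃_{l∈[ℓ,K], l≠k} { h_{kl}^{n} · ∏_{(i,j) off-diagonal in [ℓ,K]², (i,j)≠(k,l)} h_{ij}^{β_{ij}} : β_{ij} ∈ [0,n−1] } ∪ (V_{ℓ,n} \ {1}), where V_{ℓ,n} = { ∏ h_{ij}^{β_{ij}} : β_{ij} ∈ [0,n−1] }. Then |I_{k,ℓ}| = n^{K_ℓ(K_ℓ−1)} + (K_ℓ−1)n^{K_ℓ(K_ℓ−1)−1} − 1, where K_ℓ = K−ℓ+1. -/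
/-- The finset of exponent vectors supported on `E` with values `< n`. -/
noncomputable def GFdef (n : ℕ) (E : Finset (ℕ × ℕ)) : Finset (ℕ × ℕ → ℕ) :=
  letI := Classical.decEq (ℕ × ℕ → ℕ)
  (E.pi fun _ => Finset.range n).image (fun f p => if h : p ∈ E then f p h else 0)

lemma mem_GFdef {n : ℕ} {E : Finset (ℕ × ℕ)} {β : ℕ × ℕ → ℕ} :
    β ∈ GFdef n E ↔ (∀ p ∈ E, β p < n) ∧ ∀ p ∉ E, β p = 0 := by
  classical
  rw [GFdef]
  constructor
  · intro hb
    simp only [Finset.mem_image, Finset.mem_pi, Finset.mem_range] at hb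
    obtain ⟨f, hf, rfl⟩ := hb
    exact ⟨fun p hp => by simp [hp, hf p hp], fun p hp => by simp [hp]⟩
  · rintro ⟨h1, h2⟩
    simp only [Finset.mem_image, Finset.mem_pi, Finset.mem_range]
    refine ⟨fun p _ => β p, fun p hp => h1 p hp, ?_⟩
    funext p
    by_cases hp : p ∈ E <;> simp [hp, h2]

lemma card_GFdef (n : ℕ) (E : Finset (ℕ × ℕ)) : (GFdef n E).card = n ^ E.card := by
  classical
  rw [GFdef, Finset.card_image_of_injOn, Finset.card_pi]
  · simp
  · intro f hf g hg h
    funext p hp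
    have := congrFun h p
    simpa [hp] using this

/-- Cardinality of the interference dimension set `I_{k,ℓ}` of the multi-layer
interference alignment scheme: monomials are identified with their exponent vectors
`β : ℕ × ℕ → ℕ` supported on the off-diagonal pairs of `[ℓ,K]²`;
`|I_{k,ℓ}| = n^{K_ℓ(K_ℓ−1)} + (K_ℓ−1)·n^{K_ℓ(K_ℓ−1)−1} − 1` with `K_ℓ = K−ℓ+1`. -/
theorem interference_set_card (K ℓ k n : ℕ) (hn : 1 ≤ n) (hℓ : 1 ≤ ℓ) (hK : ℓ + 2 ≤ K)
    (hk₁ : ℓ ≤ k) (hk₂ : k ≤ K) :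
    Set.ncard
      ((⋃ l ∈ {l : ℕ | ℓ ≤ l ∧ l ≤ K ∧ l ≠ k},
          {β : ℕ × ℕ → ℕ | β (k, l) = n ∧
            ∀ p : ℕ × ℕ,
              ((ℓ ≤ p.1 ∧ p.1 ≤ K ∧ ℓ ≤ p.2 ∧ p.2 ≤ K ∧ p.1 ≠ p.2) ∧ p ≠ (k, l) → β p < n) ∧
              (¬(ℓ ≤ p.1 ∧ p.1 ≤ K ∧ ℓ ≤ p.2 ∧ p.2 ≤ K ∧ p.1 ≠ p.2) → β p = 0)})
        ∪ ({β : ℕ × ℕ → ℕ | ∀ p : ℕ × ℕ,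
              ((ℓ ≤ p.1 ∧ p.1 ≤ K ∧ ℓ ≤ p.2 ∧ p.2 ≤ K ∧ p.1 ≠ p.2) → β p < n) ∧
              (¬(ℓ ≤ p.1 ∧ p.1 ≤ K ∧ ℓ ≤ p.2 ∧ p.2 ≤ K ∧ p.1 ≠ p.2) → β p = 0)}
            \ {fun _ => 0}))
      = n ^ ((K - ℓ + 1) * (K - ℓ + 1 - 1))
          + (K - ℓ + 1 - 1) * n ^ ((K - ℓ + 1) * (K - ℓ + 1 - 1) - 1) - 1 := by
  classical
  set D : Finset (ℕ × ℕ) := (Finset.Icc ℓ K).offDiag with hD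
  have hP : ∀ p : ℕ × ℕ,
      (ℓ ≤ p.1 ∧ p.1 ≤ K ∧ ℓ ≤ p.2 ∧ p.2 ≤ K ∧ p.1 ≠ p.2) ↔ p ∈ D := by
    intro p
    rw [hD, Finset.mem_offDiag]
    simp only [Finset.mem_Icc]
    tauto
  set L : Finset ℕ := (Finset.Icc ℓ K).erase k with hL
  have hLmem : ∀ l : ℕ, l ∈ L ↔ (ℓ ≤ l ∧ l ≤ K ∧ l ≠ k) := by
    intro l; rw [hL, Finset.mem_erase, Finset.mem_Icc]; tauto
  have hklD : ∀ l ∈ L, (k, l) ∈ D := by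
    intro l hl
    rw [hLmem] at hl
    exact (hP (k, l)).1 ⟨hk₁, hk₂, hl.1, hl.2.1, fun h => hl.2.2 h.symm⟩
  set bigF : Finset (ℕ × ℕ → ℕ) :=
    (L.biUnion fun l => (GFdef n (D.erase (k, l))).image fun β => Function.update β (k, l) n)
      ∪ (GFdef n D \ {fun _ => 0}) with hbigF
  -- membership characterization of each piece
  have hAl : ∀ l ∈ L, ∀ β : ℕ × ℕ → ℕ,
      (β (k, l) = n ∧ ∀ p : ℕ × ℕ,
          ((ℓ ≤ p.1 ∧ p.1 ≤ K ∧ ℓ ≤ p.2 ∧ p.2 ≤ K ∧ p.1 ≠ p.2) ∧ p ≠ (k, l) → β p < n) ∧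
          (¬(ℓ ≤ p.1 ∧ p.1 ≤ K ∧ ℓ ≤ p.2 ∧ p.2 ≤ K ∧ p.1 ≠ p.2) → β p = 0)) ↔
        β ∈ (GFdef n (D.erase (k, l))).image fun γ => Function.update γ (k, l) n := by
    intro l hl β
    constructor
    · rintro ⟨hβn, hβ⟩
      rw [Finset.mem_image]
      refine ⟨Function.update β (k, l) 0, ?_, ?_⟩
      · rw [mem_GFdef]
        constructor
        · intro p hp
          rw [Finset.mem_erase] at hp
          rw [Function.update_of_ne hp.1]
          exact (hβ p).1 ⟨(hP p).2 hp.2, hp.1⟩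
        · intro p hp
          rw [Finset.mem_erase] at hp
          push_neg at hp
          by_cases hpe : p = (k, l)
          · subst hpe; simp
          · rw [Function.update_of_ne hpe]
            exact (hβ p).2 fun h => (hp hpe) ((hP p).1 h)
      · funext p
        by_cases hpe : p = (k, l)
        · subst hpe; simp [hβn]
        · simp [Function.update_of_ne hpe]
    · intro hb
      rw [Finset.mem_image] at hb
      obtain ⟨γ, hγ, rfl⟩ := hb
      rw [mem_GFdef] at hγ
      refine ⟨by simp, fun p => ⟨?_, ?_⟩⟩
      · rintro ⟨hp, hpe⟩
        rw [Function.update_of_ne hpe]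
        exact hγ.1 p (Finset.mem_erase.2 ⟨hpe, (hP p).1 hp⟩)
      · intro hp
        have hpe : p ≠ (k, l) := by
          rintro rfl
          exact hp ((hP (k, l)).2 (hklD l hl))
        rw [Function.update_of_ne hpe]
        exact hγ.2 p fun hmem => hp ((hP p).2 (Finset.mem_of_mem_erase hmem))
  have hV : ∀ β : ℕ × ℕ → ℕ,
      (∀ p : ℕ × ℕ,
          ((ℓ ≤ p.1 ∧ p.1 ≤ K ∧ ℓ ≤ p.2 ∧ p.2 ≤ K ∧ p.1 ≠ p.2) → β p < n) ∧
          (¬(ℓ ≤ p.1 ∧ p.1 ≤ K ∧ ℓ ≤ p.2 ∧ p.2 ≤ K ∧ p.1 ≠ p.2) → β p = 0)) ↔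
        β ∈ GFdef n D := by
    intro β
    rw [mem_GFdef]
    constructor
    · intro h
      exact ⟨fun p hp => (h p).1 ((hP p).2 hp), fun p hp => (h p).2 fun h' => hp ((hP p).1 h')⟩
    · intro h p
      exact ⟨fun hp => h.1 p ((hP p).1 hp), fun hp => h.2 p fun h' => hp ((hP p).2 h')⟩
  -- the big set is the coercion of bigF
  have hset : (⋃ l ∈ {l : ℕ | ℓ ≤ l ∧ l ≤ K ∧ l ≠ k},
          {β : ℕ × ℕ → ℕ | β (k, l) = n ∧
            ∀ p : ℕ × ℕ,
              ((ℓ ≤ p.1 ∧ p.1 ≤ K ∧ ℓ ≤ p.2 ∧ p.2 ≤ K ∧ p.1 ≠ p.2) ∧ p ≠ (k, l) → β p < n) ∧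
              (¬(ℓ ≤ p.1 ∧ p.1 ≤ K ∧ ℓ ≤ p.2 ∧ p.2 ≤ K ∧ p.1 ≠ p.2) → β p = 0)})
        ∪ ({β : ℕ × ℕ → ℕ | ∀ p : ℕ × ℕ,
              ((ℓ ≤ p.1 ∧ p.1 ≤ K ∧ ℓ ≤ p.2 ∧ p.2 ≤ K ∧ p.1 ≠ p.2) → β p < n) ∧
              (¬(ℓ ≤ p.1 ∧ p.1 ≤ K ∧ ℓ ≤ p.2 ∧ p.2 ≤ K ∧ p.1 ≠ p.2) → β p = 0)}
            \ {fun _ => 0}) = ↑bigF := by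
    ext β
    simp only [Set.mem_union, Set.mem_iUnion, Set.mem_setOf_eq, Set.mem_diff,
      Set.mem_singleton_iff, hbigF, Finset.coe_union, Finset.coe_biUnion, Finset.mem_coe,
      Finset.mem_biUnion, Finset.coe_sdiff, Finset.mem_sdiff, Finset.mem_singleton,
      Set.mem_setOf_eq]
    constructor
    · rintro (⟨l, hl, hβ⟩ | ⟨hβ, h0⟩)
      · exact Or.inl ⟨l, (hLmem l).2 hl, (hAl l ((hLmem l).2 hl) β).1 hβ⟩
      · exact Or.inr ⟨(hV β).1 hβ, h0⟩
    · rintro (⟨l, hl, hβ⟩ | ⟨hβ, h0⟩)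
      · exact Or.inl ⟨l, (hLmem l).1 hl, (hAl l hl β).2 hβ⟩
      · exact Or.inr ⟨(hV β).2 hβ, h0⟩
  rw [hset, Set.ncard_coe_finset]
  -- disjointness facts
  have hupd : ∀ l ∈ L, ∀ β ∈ (GFdef n (D.erase (k, l))).image fun γ => Function.update γ (k, l) n,
      β (k, l) = n ∧ ∀ p ∈ D, p ≠ (k, l) → β p < n := by
    intro l hl β hβ
    rw [Finset.mem_image] at hβ
    obtain ⟨γ, hγ, rfl⟩ := hβ
    rw [mem_GFdef] at hγ
    refine ⟨by simp, fun p hp hpe => ?_⟩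
    rw [Function.update_of_ne hpe]
    exact hγ.1 p (Finset.mem_erase.2 ⟨hpe, hp⟩)
  have hpair : ∀ l₁ ∈ L, ∀ l₂ ∈ L, l₁ ≠ l₂ →
      Disjoint ((GFdef n (D.erase (k, l₁))).image fun γ => Function.update γ (k, l₁) n)
        ((GFdef n (D.erase (k, l₂))).image fun γ => Function.update γ (k, l₂) n) := by
    intro l₁ h₁ l₂ h₂ hne
    rw [Finset.disjoint_left]
    intro β hb₁ hb₂
    have e1 := (hupd l₁ h₁ β hb₁).1
    have e2 := (hupd l₂ h₂ β hb₂).2 (k, l₁) (hklD l₁ h₁)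
      (fun h => hne (congrArg Prod.snd h))
    omega
  have hdisj : Disjoint
      (L.biUnion fun l => (GFdef n (D.erase (k, l))).image fun γ => Function.update γ (k, l) n)
      (GFdef n D \ {fun _ => 0}) := by
    rw [Finset.disjoint_left]
    intro β hb₁ hb₂
    rw [Finset.mem_biUnion] at hb₁
    obtain ⟨l, hl, hb⟩ := hb₁
    have e1 := (hupd l hl β hb).1
    have e2 : β (k, l) < n := by
      rw [Finset.mem_sdiff] at hb₂
      have := hb₂.1
      rw [mem_GFdef] at this
      exact this.1 (k, l) (hklD l hl)
    omega
  have hinj : ∀ l ∈ L, ((GFdef n (D.erase (k, l))).image fun γ => Function.update γ (k, l) n).card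
      = n ^ ((D.erase (k, l)).card) := by
    intro l hl
    rw [Finset.card_image_of_injOn, card_GFdef]
    intro γ₁ h₁ γ₂ h₂ h
    rw [Finset.mem_coe, mem_GFdef] at h₁ h₂
    have z₁ : γ₁ (k, l) = 0 := h₁.2 (k, l) (Finset.notMem_erase _ _)
    have z₂ : γ₂ (k, l) = 0 := h₂.2 (k, l) (Finset.notMem_erase _ _)
    funext p
    by_cases hpe : p = (k, l)
    · rw [hpe, z₁, z₂]
    · simpa [Function.update_of_ne hpe] using congrFun h p
  -- cardinalities
  have hDcard : D.card = (K - ℓ + 1) * (K - ℓ + 1) - (K - ℓ + 1) := by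
    rw [hD, Finset.offDiag_card, Nat.card_Icc, show K + 1 - ℓ = K - ℓ + 1 from by omega]
  have h0GF : (fun _ : ℕ × ℕ => 0) ∈ GFdef n D := by
    rw [mem_GFdef]
    exact ⟨fun p _ => hn, fun p _ => rfl⟩
  have hLcard : L.card = K - ℓ + 1 - 1 := by
    rw [hL, Finset.card_erase_of_mem (Finset.mem_Icc.2 ⟨hk₁, hk₂⟩), Nat.card_Icc]
    omega
  rw [hbigF, Finset.card_union_of_disjoint hdisj, Finset.card_biUnion hpair,
    Finset.card_sdiff_of_subset (by simp [h0GF]), Finset.card_singleton]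
  have hsum : ∀ l ∈ L, ((GFdef n (D.erase (k, l))).image fun γ => Function.update γ (k, l) n).card
      = n ^ (D.card - 1) := by
    intro l hl
    rw [hinj l hl, Finset.card_erase_of_mem (hklD l hl)]
  rw [Finset.sum_congr rfl hsum, Finset.sum_const, smul_eq_mul, card_GFdef, hLcard]
  have hM : D.card = (K - ℓ + 1) * (K - ℓ + 1 - 1) := by
    rw [hDcard, Nat.mul_sub_one]
  rw [hM]
  have h1 : 1 ≤ n ^ ((K - ℓ + 1) * (K - ℓ + 1 - 1)) := Nat.one_le_pow _ _ hn
  omega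
end
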